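/- A topological space X validates the formula AT0 := (p ∧ [≠]¬p ∧ ⟨≠⟩(q ∧ [≠]¬q)) → (□¬q ∨ ⟨≠⟩(q ∧ □¬p)) under all valuations (where □ is interpreted as topological interior and [≠]φ means 'φ holds at all points other than the current one') if and only if X is a T0 space. -/

import Mathlib

/-!
At a point `x`, the conjunct `p ∧ [≠]¬p` says `V p = {x}` and `⟨≠⟩(q ∧ [≠]¬q)` says `V q = {y}`
for some `y ≠ x`. Under such a valuation the consequent `□¬q ∨ ⟨≠⟩(q ∧ □¬p)` says that some open
set contains exactly one of `x` and `y`. Hence AT0 is valid iff distinct points are never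
topologically indistinguishable.
-/

inductive Formula : Type where
  | var : Nat → Formula
  | bot : Formula
  | imp : Formula → Formula → Formula
  | box : Formula → Formula
  | dbox : Formula → Formula

def Formula.neg (φ : Formula) : Formula := .imp φ .bot
def Formula.and (φ ψ : Formula) : Formula := .neg (.imp φ (.neg ψ))
def Formula.or (φ ψ : Formula) : Formula := .imp (.neg φ) ψ
def Formula.ddiam (φ : Formula) : Formula := .neg (.dbox (.neg φ))

/-- AT0 := (p ∧ [≠]¬p ∧ ⟨≠⟩(q ∧ [≠]¬q)) → (□¬q ∨ ⟨≠⟩(q ∧ □¬p)), with p = var 0, q = var 1. -/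
def AT0 : Formula :=
  .imp (.and (.and (.var 0) (.dbox (.neg (.var 0))))
             (.ddiam (.and (.var 1) (.dbox (.neg (.var 1))))))
       (.or (.box (.neg (.var 1))) (.ddiam (.and (.var 1) (.box (.neg (.var 0))))))

/-- Plain topological semantics: `□` is interior, `[≠]φ` means `φ` holds at all
points other than the current one. -/
def tsat {X : Type*} [TopologicalSpace X] (V : Nat → Set X) : X → Formula → Prop
  | x, .var p => x ∈ V p
  | _, .bot => False
  | x, .imp φ ψ => tsat V x φ → tsat V x ψ
  | x, .box φ => ∃ U : Set X, IsOpen U ∧ x ∈ U ∧ ∀ y ∈ U, tsat V y φ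
  | x, .dbox φ => ∀ y, y ≠ x → tsat V y φ

lemma exists_isOpen_xor_mem_iff {X : Type*} [TopologicalSpace X] {x y : X} :
    (∃ U : Set X, IsOpen U ∧ Xor (x ∈ U) (y ∈ U)) ↔
      (∃ U : Set X, IsOpen U ∧ x ∈ U ∧ y ∉ U) ∨ ∃ U : Set X, IsOpen U ∧ y ∈ U ∧ x ∉ U := by
  simp only [Xor, and_or_left, exists_or]

section Semantics

variable {X : Type*} [TopologicalSpace X] {V : Nat → Set X} {x : X} {φ ψ : Formula}

@[simp] lemma tsat_var (n : Nat) : tsat V x (.var n) ↔ x ∈ V n := Iff.rfl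

@[simp] lemma tsat_box : tsat V x φ.box ↔ ∃ U, IsOpen U ∧ x ∈ U ∧ ∀ y ∈ U, tsat V y φ := Iff.rfl

@[simp] lemma tsat_imp : tsat V x (.imp φ ψ) ↔ (tsat V x φ → tsat V x ψ) := Iff.rfl

@[simp] lemma tsat_neg : tsat V x φ.neg ↔ ¬tsat V x φ := Iff.rfl

@[simp] lemma tsat_and : tsat V x (φ.and ψ) ↔ tsat V x φ ∧ tsat V x ψ := by
  simp [Formula.and, tsat]

@[simp] lemma tsat_or : tsat V x (φ.or ψ) ↔ tsat V x φ ∨ tsat V x ψ := by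
  simp [Formula.or, or_iff_not_imp_left]

@[simp] lemma tsat_ddiam : tsat V x φ.ddiam ↔ ∃ y ≠ x, tsat V y φ := by
  simp [Formula.ddiam, tsat]

lemma tsat_var_and_dbox_neg_var_iff (n : Nat) :
    tsat V x (.var n) ∧ tsat V x (.dbox (.neg (.var n))) ↔ V n = {x} := by
  simp [tsat, Set.eq_singleton_iff_unique_mem, not_imp_not]

theorem tsat_AT0_iff :
    tsat V x AT0 ↔ ∀ y ≠ x, V 0 = {x} → V 1 = {y} → ¬Inseparable x y := by
  simp only [AT0, tsat_imp, tsat_or, tsat_and, tsat_ddiam, tsat_var_and_dbox_neg_var_iff]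
  simp only [tsat_box, tsat_neg, tsat_var, not_inseparable_iff_exists_open,
    exists_isOpen_xor_mem_iff]
  refine ⟨fun h y hyx h0 h1 => ?_, fun h ⟨h0, y, hyx, h1⟩ => ?_⟩
  · simpa [h0, h1, hyx, imp_not_comm] using h ⟨h0, y, hyx, h1⟩
  · simpa [h0, h1, hyx, imp_not_comm] using h y hyx h0 h1

end Semantics

/-- A topological space validates AT0 under all valuations iff it is T0. -/
theorem stmt0 {X : Type*} [TopologicalSpace X] :
    (∀ (V : Nat → Set X) (x : X), tsat V x AT0) ↔ T0Space X := by
  simp only [tsat_AT0_iff, t0Space_iff_not_inseparable]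
  refine ⟨fun h x y hxy => ?_, fun h V x y hyx _ _ => h hyx.symm⟩
  exact h (fun n => if n = 0 then {x} else {y}) x y hxy.symm rfl rfl
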